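/- arXiv:1409.3601 — 4 statements merged into one kernel-verified Lean document; each statement's English description precedes it below -/
import Mathlib

section
/- Let $X$ have density $f$ on $\mathbb{R}^d$, and define $Z(v) = \mu\{x : f(x) > v\}$ (Lebesgue measure of the superlevel set), assumed differentiable. Then the random variable $Y = f(X)$, the vertical density ordinate, has density $g(v) = -v\, Z'(v)$. -/
open MeasureTheory Set Filter Topology
open scoped ENNReal

/-!
Push `f` forward first: with `τ = f_* λ`, the law of `f(X)` is `τ` weighted by the density
`v ↦ v`, and `Z(v) = τ(v, ∞)`. Writing `G(v)` for the mass of `(v, ∞)` under this law,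
`G(a) - G(b) = ∫_{(a,b]} v dτ` lies between `a (Z(a) - Z(b))` and `b (Z(a) - Z(b))`, so
`G' = v Z'` wherever `Z` is differentiable. Since `G` decreases to `0` at infinity,
`G(a) = ∫_a^∞ -v Z'(v) dv` for `a > 0`, and a finite measure carried by `(0, ∞)` is determined
by these tails.
-/

namespace MeasureTheory

theorem map_withDensity_comp {α β : Type*} [MeasurableSpace α] [MeasurableSpace β]
    {μ : Measure α} {f : α → β} (hf : Measurable f) {g : β → ℝ≥0∞} (hg : Measurable g) :
    (μ.withDensity fun x => g (f x)).map f = (μ.map f).withDensity g := by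
  ext s hs
  rw [Measure.map_apply hf hs, withDensity_apply _ (hf hs), withDensity_apply _ hs,
    setLIntegral_map hs hg hf]

theorem measure_Ioi_eq_iSup_measure_Ioi_add (m : Measure ℝ) (a : ℝ) :
    m (Ioi a) = ⨆ n : ℕ, m (Ioi (a + 1 / (n + 1))) := by
  have hmono : Monotone fun n : ℕ => Ioi (a + 1 / ((n : ℝ) + 1)) := fun i j hij =>
    Ioi_subset_Ioi (by gcongr)
  rw [← hmono.measure_iUnion]
  congr 1
  ext x
  simp only [mem_iUnion, mem_Ioi]
  constructor
  · intro hx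
    obtain ⟨n, hn⟩ := exists_nat_one_div_lt (sub_pos.2 hx)
    exact ⟨n, by linarith⟩
  · rintro ⟨n, hn⟩
    exact lt_trans (by simp only [lt_add_iff_pos_right]; positivity) hn

theorem Measure.ext_of_Ioi_of_Iic_zero_null {m₁ m₂ : Measure ℝ} [IsFiniteMeasure m₁]
    (h₁ : m₁ (Iic 0) = 0) (h₂ : m₂ (Iic 0) = 0) (h : ∀ a, 0 < a → m₁ (Ioi a) = m₂ (Ioi a)) :
    m₁ = m₂ := by
  have hIoi_zero : m₁ (Ioi 0) = m₂ (Ioi 0) := by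
    rw [measure_Ioi_eq_iSup_measure_Ioi_add, measure_Ioi_eq_iSup_measure_Ioi_add]
    exact iSup_congr fun n => h _ (by positivity)
  have huniv : ∀ m : Measure ℝ, m (Iic 0) = 0 → m univ = m (Ioi 0) := fun m hm => by
    rw [← Iic_union_Ioi (a := (0 : ℝ)), measure_union (Iic_disjoint_Ioi le_rfl) measurableSet_Ioi,
      hm, zero_add]
  refine ext_of_Iic m₁ m₂ fun a => ?_
  rcases le_or_gt a 0 with ha | ha
  · rw [measure_mono_null (Iic_subset_Iic.2 ha) h₁, measure_mono_null (Iic_subset_Iic.2 ha) h₂]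
  · have hfin : m₂ (Ioi a) ≠ ∞ := h a ha ▸ measure_ne_top m₁ _
    rw [← compl_Ioi, measure_compl measurableSet_Ioi (measure_ne_top m₁ _),
      measure_compl measurableSet_Ioi hfin, huniv m₁ h₁, huniv m₂ h₂, hIoi_zero, h a ha]

theorem tendsto_measureReal_Ioi_atTop (m : Measure ℝ) [IsFiniteMeasure m] :
    Tendsto (fun t => m.real (Ioi t)) atTop (𝓝 0) := by
  have h := tendsto_measure_iInter_atTop (μ := m) (fun t => nullMeasurableSet_Ioi)
    (fun s t hst => Ioi_subset_Ioi hst) ⟨0, measure_ne_top m _⟩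
  have hempty : ⋂ t : ℝ, Ioi t = ∅ := eq_empty_of_forall_notMem fun x hx =>
    lt_irrefl x (mem_iInter.1 hx x)
  rw [hempty, measure_empty] at h
  exact (ENNReal.tendsto_toReal ENNReal.zero_ne_top).comp h

theorem measureReal_Ioi_sub_measureReal_Ioi {α : Type*} [MeasurableSpace α] [LinearOrder α]
    [TopologicalSpace α] [OrderTopology α] [OpensMeasurableSpace α] {μ : Measure α} {a b : α}
    (hab : a ≤ b) (ha : μ (Ioi a) ≠ ∞ := by finiteness) :
    μ.real (Ioi a) - μ.real (Ioi b) = μ.real (Ioc a b) := by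
  rw [← measureReal_sdiff (Ioi_subset_Ioi hab) measurableSet_Ioi ha, Ioi_sdiff_Ioi]

section LevelDistribution

variable {τ : Measure ℝ}

theorem withDensity_ofReal_apply_Iic_zero : τ.withDensity ENNReal.ofReal (Iic 0) = 0 := by
  rw [withDensity_apply _ measurableSet_Iic]
  exact (setLIntegral_congr_fun measurableSet_Iic fun v hv => ENNReal.ofReal_eq_zero.2 hv).trans
    lintegral_zero

theorem ofReal_mul_le_withDensity_ofReal {s : Set ℝ} (hs : MeasurableSet s) {a : ℝ}
    (ha : ∀ v ∈ s, a ≤ v) : ENNReal.ofReal a * τ s ≤ τ.withDensity ENNReal.ofReal s := by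
  rw [withDensity_apply _ hs, ← setLIntegral_const]
  exact setLIntegral_mono ENNReal.measurable_ofReal fun v hv => ENNReal.ofReal_le_ofReal (ha v hv)

theorem withDensity_ofReal_le_ofReal_mul {s : Set ℝ} (hs : MeasurableSet s) {b : ℝ}
    (hb : ∀ v ∈ s, v ≤ b) : τ.withDensity ENNReal.ofReal s ≤ ENNReal.ofReal b * τ s := by
  rw [withDensity_apply _ hs, ← setLIntegral_const]
  exact setLIntegral_mono measurable_const fun v hv => ENNReal.ofReal_le_ofReal (hb v hv)

variable [IsFiniteMeasure (τ.withDensity ENNReal.ofReal)]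

theorem measure_Ioi_ne_top_of_withDensity_ofReal {a : ℝ} (ha : 0 < a) : τ (Ioi a) ≠ ∞ := by
  have h := ofReal_mul_le_withDensity_ofReal (τ := τ) (measurableSet_Ioi (a := a))
    fun _ hv => hv.le
  exact (ENNReal.lt_top_of_mul_ne_top_right (ne_top_of_le_ne_top (measure_ne_top _ _) h)
    (ENNReal.ofReal_pos.2 ha).ne').ne

theorem mul_measureReal_Ioc_le_withDensity_ofReal {a b : ℝ} (ha : 0 < a) (hab : a ≤ b) :
    a * τ.real (Ioc a b) ≤ (τ.withDensity ENNReal.ofReal).real (Ioc a b) ∧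
      (τ.withDensity ENNReal.ofReal).real (Ioc a b) ≤ b * τ.real (Ioc a b) := by
  have hfin : τ (Ioc a b) ≠ ∞ := ne_top_of_le_ne_top (measure_Ioi_ne_top_of_withDensity_ofReal ha)
    (measure_mono Ioc_subset_Ioi_self)
  constructor
  · have h := ofReal_mul_le_withDensity_ofReal (τ := τ) (measurableSet_Ioc (a := a) (b := b))
      fun _ hv => hv.1.le
    rw [← ENNReal.ofReal_toReal hfin, ← ENNReal.ofReal_mul ha.le] at h
    exact (ENNReal.ofReal_le_iff_le_toReal (measure_ne_top _ _)).1 h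
  · have h := withDensity_ofReal_le_ofReal_mul (τ := τ) (measurableSet_Ioc (a := a) (b := b))
      fun _ hv => hv.2
    rw [← ENNReal.ofReal_toReal hfin, ← ENNReal.ofReal_mul (ha.le.trans hab)] at h
    exact ENNReal.toReal_le_of_le_ofReal (mul_nonneg (ha.le.trans hab) measureReal_nonneg) h

theorem abs_measureReal_Ioi_sub_sub_mul_le {a b : ℝ} (ha : 0 < a) (hb : 0 < b) :
    |((τ.withDensity ENNReal.ofReal).real (Ioi b) - (τ.withDensity ENNReal.ofReal).real (Ioi a)) -
        a * (τ.real (Ioi b) - τ.real (Ioi a))| ≤ |b - a| * |τ.real (Ioi b) - τ.real (Ioi a)| := by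
  rcases le_total a b with hab | hba
  · obtain ⟨h₁, h₂⟩ := mul_measureReal_Ioc_le_withDensity_ofReal (τ := τ) ha hab
    rw [← neg_sub _ ((τ.withDensity ENNReal.ofReal).real (Ioi b)), ← neg_sub _ (τ.real (Ioi b)),
      measureReal_Ioi_sub_measureReal_Ioi (μ := τ.withDensity ENNReal.ofReal) hab,
      measureReal_Ioi_sub_measureReal_Ioi hab
        (measure_Ioi_ne_top_of_withDensity_ofReal ha),
      abs_neg, abs_of_nonneg measureReal_nonneg, abs_of_nonneg (sub_nonneg.2 hab), abs_le]
    constructor <;> nlinarith [measureReal_nonneg (μ := τ) (s := Ioc a b)]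
  · obtain ⟨h₁, h₂⟩ := mul_measureReal_Ioc_le_withDensity_ofReal (τ := τ) hb hba
    rw [measureReal_Ioi_sub_measureReal_Ioi (μ := τ.withDensity ENNReal.ofReal) hba,
      measureReal_Ioi_sub_measureReal_Ioi hba
        (measure_Ioi_ne_top_of_withDensity_ofReal hb),
      abs_of_nonneg measureReal_nonneg, abs_of_nonpos (sub_nonpos.2 hba), abs_le]
    constructor <;> nlinarith [measureReal_nonneg (μ := τ) (s := Ioc b a)]

theorem hasDerivAt_measureReal_withDensity_ofReal_Ioi {a Z' : ℝ} (ha : 0 < a)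
    (hZ : HasDerivAt (fun t => τ.real (Ioi t)) Z' a) :
    HasDerivAt (fun t => (τ.withDensity ENNReal.ofReal).real (Ioi t)) (a * Z') a := by
  set Z := fun t => τ.real (Ioi t)
  set G := fun t => (τ.withDensity ENNReal.ofReal).real (Ioi t)
  have hslope := hasDerivAt_iff_tendsto_slope.1 hZ
  have hZ_cont : Tendsto (fun b => |Z b - Z a|) (𝓝[≠] a) (𝓝 0) := by
    simpa using ((hZ.continuousAt.tendsto.mono_left nhdsWithin_le_nhds).sub_const (Z a)).abs
  have herr : Tendsto (fun b => slope G a b - a * slope Z a b) (𝓝[≠] a) (𝓝 0) := by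
    refine squeeze_zero_norm' ?_ hZ_cont
    filter_upwards [self_mem_nhdsWithin, nhdsWithin_le_nhds (lt_mem_nhds ha)] with b hb hb_pos
    have hba : 0 < |b - a| := abs_pos.2 (sub_ne_zero.2 hb)
    rw [slope_def_field, slope_def_field, Real.norm_eq_abs, mul_div_assoc', ← sub_div, abs_div,
      div_le_iff₀ hba, mul_comm |Z b - Z a|]
    exact abs_measureReal_Ioi_sub_sub_mul_le (τ := τ) ha hb_pos
  rw [hasDerivAt_iff_tendsto_slope]
  simpa using herr.add (hslope.const_mul a)

theorem withDensity_ofReal_Ioi_eq_lintegral {Z' : ℝ → ℝ}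
    (hZ' : ∀ v, 0 < v → HasDerivAt (fun t => τ.real (Ioi t)) (Z' v) v) {a : ℝ} (ha : 0 < a) :
    τ.withDensity ENNReal.ofReal (Ioi a) = ∫⁻ v in Ioi a, ENNReal.ofReal (-(v * Z' v)) := by
  set G := fun t => (τ.withDensity ENNReal.ofReal).real (Ioi t)
  have hderiv : ∀ v ∈ Ici a, HasDerivAt (-G) (-(v * Z' v)) v := fun v hv =>
    (hasDerivAt_measureReal_withDensity_ofReal_Ioi (ha.trans_le hv) (hZ' v (ha.trans_le hv))).neg
  have hmono : Monotone (-G) := fun s t hst =>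
    neg_le_neg (measureReal_mono (Ioi_subset_Ioi hst))
  have hnonneg : ∀ v ∈ Ioi a, 0 ≤ -(v * Z' v) := fun v hv =>
    (hderiv v (Ioi_subset_Ici_self hv)).nonneg_of_monotone hmono
  have htendsto : Tendsto (-G) atTop (𝓝 0) :=
    neg_zero (G := ℝ) ▸ (tendsto_measureReal_Ioi_atTop (τ.withDensity ENNReal.ofReal)).neg
  rw [← ofReal_integral_eq_lintegral_ofReal
      (integrableOn_Ioi_deriv_of_nonneg' hderiv hnonneg htendsto)
      ((ae_restrict_iff' measurableSet_Ioi).2 (.of_forall hnonneg)),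
    integral_Ioi_of_hasDerivAt_of_nonneg' hderiv hnonneg htendsto, zero_sub, Pi.neg_apply, neg_neg,
    ofReal_measureReal]

theorem withDensity_ofReal_eq_withDensity_neg_mul_deriv {Z' : ℝ → ℝ}
    (hZ' : ∀ v, 0 < v → HasDerivAt (fun t => τ.real (Ioi t)) (Z' v) v) :
    τ.withDensity ENNReal.ofReal =
      volume.withDensity ((Ioi 0).indicator fun v => ENNReal.ofReal (-(v * Z' v))) := by
  rw [withDensity_indicator measurableSet_Ioi]
  refine Measure.ext_of_Ioi_of_Iic_zero_null withDensity_ofReal_apply_Iic_zero ?_ fun a ha => ?_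
  · refine withDensity_absolutelyContinuous _ _ ?_
    rw [Measure.restrict_apply measurableSet_Iic, (Iic_disjoint_Ioi le_rfl).inter_eq, measure_empty]
  · rw [withDensity_ofReal_Ioi_eq_lintegral hZ' ha, withDensity_apply _ measurableSet_Ioi,
      Measure.restrict_restrict measurableSet_Ioi, inter_eq_left.2 (Ioi_subset_Ioi ha.le)]

end LevelDistribution

end MeasureTheory

theorem vertical_density_representation_general (d : ℕ)
    (f : (Fin d → ℝ) → ℝ) (hf : Measurable f)
    (hfdens : ∫⁻ x, ENNReal.ofReal (f x) = 1)
    (Z Z' : ℝ → ℝ) (hZ : ∀ v, Z v = (volume {x | v < f x}).toReal)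
    (hZ' : ∀ v, 0 < v → HasDerivAt Z (Z' v) v) :
    Measure.map f (volume.withDensity fun x => ENNReal.ofReal (f x))
      = volume.withDensity fun v =>
          (Ioi (0 : ℝ)).indicator (fun v => ENNReal.ofReal (-(v * Z' v))) v := by
  have hmap : Measure.map f (volume.withDensity fun x => ENNReal.ofReal (f x)) =
      (volume.map f).withDensity ENNReal.ofReal :=
    map_withDensity_comp hf ENNReal.measurable_ofReal
  have : IsFiniteMeasure (volume.withDensity fun x => ENNReal.ofReal (f x)) :=
    isFiniteMeasure_withDensity (by simp [hfdens])
  have : IsFiniteMeasure ((volume.map f).withDensity ENNReal.ofReal) := hmap ▸ inferInstance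
  have hZ_eq : Z = fun v => (volume.map f).real (Ioi v) := funext fun v => by
    rw [hZ, measureReal_def, Measure.map_apply hf measurableSet_Ioi]
    rfl
  subst hZ_eq
  rw [hmap]
  exact withDensity_ofReal_eq_withDensity_neg_mul_deriv hZ'

/-- Troutt's vertical-density representation: if `X` has density `f` on `ℝ^d` and
`Z(v) = μ{x : f(x) > v}` (Lebesgue measure of the superlevel set) is differentiable, then the
vertical density ordinate `Y = f(X)` has density `g(v) = -v Z'(v)`. -/
theorem vertical_density_representation (d : ℕ)
    (f : (Fin d → ℝ) → ℝ) (hf : Measurable f) (hfnn : ∀ x, 0 ≤ f x)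
    (hfdens : ∫⁻ x, ENNReal.ofReal (f x) = 1)
    (Z Z' : ℝ → ℝ) (hZ : ∀ v, Z v = (volume {x | v < f x}).toReal)
    (hZ' : ∀ v, 0 < v → HasDerivAt Z (Z' v) v) :
    Measure.map f (volume.withDensity fun x => ENNReal.ofReal (f x))
      = volume.withDensity fun v =>
          (Ioi (0 : ℝ)).indicator (fun v => ENNReal.ofReal (-(v * Z' v))) v :=
  vertical_density_representation_general d f hf hfdens Z Z' hZ hZ'
end

section
/- For the weighted slice sampler with cumulative weight function $W(u) = Z(u)^{-1}$ (assumed to define a proper joint distribution), the likelihood-ordinate chain satisfies $\mathbb{P}(L(X_{n+1}) \leq y \mid L(X_n) = y) = 1/2$ for every $y$, and for $z < y$, $\mathbb{P}(L(X_{n+1}) \leq z \mid L(X_n) = y) = \frac{1}{2} Z(y)/Z(z)$. -/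
/-!
Write `W = 1/Z` for the cumulative weight, so that `Z z / Z u = W u / W z` and `w = W'`.
The kernel integrand `(1 - W u / W z) * W' u` is the derivative of `W - W² / (2 W z)`, and
`W(0+) = 0` because `W` is the primitive of `w`; hence the integral over `(0, z)` is `W z / 2`.
Dividing by `W y` gives `Z y / (2 Z z)`, which is `1/2` at `z = y`.
-/

open MeasureTheory Set

theorem integral_one_sub_div_mul_deriv_eq {W w : ℝ → ℝ} {a b : ℝ} (hab : a ≤ b)
    (hcont : ContinuousOn W (Icc a b)) (hderiv : ∀ x ∈ Ioo a b, HasDerivAt W (w x) x)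
    (hint : IntervalIntegrable w volume a b) (hb : W b ≠ 0) :
    ∫ x in a..b, (1 - W x / W b) * w x = (W b - W a) ^ 2 / (2 * W b) := by
  set G : ℝ → ℝ := fun t => W t - W t ^ 2 / (2 * W b)
  have hG : ∀ x ∈ Ioo a b, HasDerivAt G ((1 - W x / W b) * w x) x := by
    intro x hx
    refine ((hderiv x hx).sub (((hderiv x hx).pow 2).div_const (2 * W b))).congr_deriv ?_
    field_simp
    ring
  have hGcont : ContinuousOn G (Icc a b) := by fun_prop
  have hkernel_cont : ContinuousOn (fun x => 1 - W x / W b) (uIcc a b) := by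
    rw [uIcc_of_le hab]
    fun_prop
  rw [intervalIntegral.integral_eq_sub_of_hasDeriv_right_of_le hab hGcont
    (fun x hx => (hG x hx).hasDerivWithinAt) (hint.continuousOn_mul hkernel_cont)]
  simp only [G]
  field_simp
  ring

theorem setIntegral_Ioo_one_sub_div_mul_deriv_one_div {Z w : ℝ → ℝ} {z : ℝ} (hz : 0 < z)
    (hZz : Z z ≠ 0) (hw : ∀ u ∈ Ioo 0 z, HasDerivAt (fun v => 1 / Z v) (w u) u)
    (hW : ∀ u ∈ Ioc 0 z, ∫ s in Ioo 0 u, w s = 1 / Z u) :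
    ∫ u in Ioo 0 z, (1 - Z z / Z u) * w u = 1 / (2 * Z z) := by
  have hint : IntervalIntegrable w volume 0 z := by
    rw [intervalIntegrable_iff_integrableOn_Ioo_of_le hz.le]
    refine Integrable.of_integral_ne_zero ?_
    rw [hW z ⟨hz, le_rfl⟩]
    simpa using hZz
  set F : ℝ → ℝ := fun t => ∫ s in 0..t, w s
  have hF : ∀ u ∈ Ioc 0 z, F u = 1 / Z u := fun u hu => by
    simp only [F]
    rw [intervalIntegral.integral_of_le hu.1.le, integral_Ioc_eq_integral_Ioo, hW u hu]
  have hFz : F z = 1 / Z z := hF z ⟨hz, le_rfl⟩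
  have hFderiv : ∀ u ∈ Ioo 0 z, HasDerivAt F (w u) u := fun u hu =>
    (hw u hu).congr_of_eventuallyEq <| Filter.eventually_of_mem (Ioo_mem_nhds hu.1 hu.2)
      fun v hv => hF v (Ioo_subset_Ioc_self hv)
  have hFcont : ContinuousOn F (Icc 0 z) := by
    simpa [uIcc_of_le hz.le] using
      intervalIntegral.continuousOn_primitive_interval' hint left_mem_uIcc
  calc ∫ u in Ioo 0 z, (1 - Z z / Z u) * w u = ∫ u in 0..z, (1 - F u / F z) * w u := by
        rw [intervalIntegral.integral_of_le hz.le, integral_Ioc_eq_integral_Ioo]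
        refine setIntegral_congr_fun measurableSet_Ioo fun u hu => ?_
        rw [hF u (Ioo_subset_Ioc_self hu), hFz, one_div, one_div, div_inv_eq_mul, inv_mul_eq_div]
    _ = (F z - F 0) ^ 2 / (2 * F z) :=
        integral_one_sub_div_mul_deriv_eq hz.le hFcont hFderiv hint (by simpa [hFz] using hZz)
    _ = 1 / (2 * Z z) := by
        rw [hFz, show F 0 = 0 from intervalIntegral.integral_same]
        field_simp
        ring

theorem score_weight_half_up_down_general (Z w : ℝ → ℝ) (y : ℝ) (hy : 0 < y)
    (hZpos : ∀ u, 0 < u → 0 < Z u)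
    -- w is the derivative of the cumulative weight W(u) = 1/Z(u)
    (hw : ∀ u ∈ Ioo (0 : ℝ) y, HasDerivAt (fun v => 1 / Z v) (w u) u)
    -- W(u) = 1/Z(u) is a proper cumulative weight function: W(u) = ∫_0^u w(s) ds
    (hW : ∀ u ∈ Ioc (0 : ℝ) y, (∫ s in Ioo (0 : ℝ) u, w s) = 1 / Z u) :
    (∫ u in Ioo (0 : ℝ) y, (1 - Z y / Z u) * (w u / (1 / Z y))) = 1 / 2
      ∧ ∀ z, 0 < z → z < y →
          (∫ u in Ioo (0 : ℝ) z, (1 - Z z / Z u) * (w u / (1 / Z y)))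
            = (1 / 2) * (Z y / Z z) := by
  have kernel : ∀ z, 0 < z → z ≤ y →
      (∫ u in Ioo (0 : ℝ) z, (1 - Z z / Z u) * (w u / (1 / Z y))) = (1 / 2) * (Z y / Z z) := by
    intro z hz hzy
    simp_rw [div_div_eq_mul_div, div_one, ← mul_assoc]
    rw [integral_mul_const, setIntegral_Ioo_one_sub_div_mul_deriv_one_div hz (hZpos z hz).ne'
      (fun u hu => hw u ⟨hu.1, hu.2.trans_le hzy⟩) (fun u hu => hW u ⟨hu.1, hu.2.trans hzy⟩)]
    field_simp
  refine ⟨?_, fun z hz hzy => kernel z hz hzy.le⟩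
  rw [kernel y hy le_rfl, div_self (hZpos y hy).ne', mul_one]

/-- For the weighted slice sampler with cumulative weight `W(u) = 1/Z(u)` (assumed proper),
the likelihood-ordinate chain satisfies `ℙ(L(Xₙ₊₁) ≤ y ∣ L(Xₙ) = y) = 1/2` and, for `z < y`,
`ℙ(L(Xₙ₊₁) ≤ z ∣ L(Xₙ) = y) = (1/2) Z(y)/Z(z)`.  Here the transition kernel is
`∫_0^{y∧z} (1 - Z(z)/Z(u)) (w(u)/W(y)) du` with `w = W'` and `W(y) = 1/Z(y)`. -/
theorem score_weight_half_up_down (Z w : ℝ → ℝ) (y : ℝ) (hy : 0 < y)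
    (hZpos : ∀ u, 0 < u → 0 < Z u)
    (hZanti : StrictAntiOn Z (Ioi 0))
    -- w is the derivative of the cumulative weight W(u) = 1/Z(u)
    (hw : ∀ u ∈ Ioo (0 : ℝ) y, HasDerivAt (fun v => 1 / Z v) (w u) u)
    -- W(u) = 1/Z(u) is a proper cumulative weight function: W(u) = ∫_0^u w(s) ds
    (hW : ∀ u ∈ Ioc (0 : ℝ) y, (∫ s in Ioo (0 : ℝ) u, w s) = 1 / Z u) :
    (∫ u in Ioo (0 : ℝ) y, (1 - Z y / Z u) * (w u / (1 / Z y))) = 1 / 2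
      ∧ ∀ z, 0 < z → z < y →
          (∫ u in Ioo (0 : ℝ) z, (1 - Z z / Z u) * (w u / (1 / Z y)))
            = (1 / 2) * (Z y / Z z) :=
  score_weight_half_up_down_general Z w y hy hZpos hw hW
end

section
/- Let $W(u) = 1/\max\{\eta, Z(u)\}$ for $\eta \in (0,1]$ with $Z$ continuous and strictly decreasing with $Z(0)=1$. Given $x$, let $T \sim \mathrm{Unif}(0, 1/\max\{\eta, Z(L(x))\})$, and set $u = 0$ if $T \leq 1$, otherwise $u = Z^{-1}(1/T)$. Then $u$ is a draw from the conditional density $w(u)\,\mathbb{I}\{0 \leq u \leq L(x)\}/W(L(x))$, where $w = W'$ (in the distributional sense, including an atom of $w$ at $0$ corresponding to the constant piece of $W$). -/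
open MeasureTheory Set

/-!
For `0 < t < W(ℓ)` the sampled value satisfies `u(t) ≤ u ↔ t ≤ W(u)`: for `t ≤ 1` both sides
hold because `W ≥ 1`, and for `t > 1` this is `Z⁻¹(1/t) ≤ u ↔ max{η, Z(u)} ≤ 1/t`, by
monotonicity of `Z`. Hence `{u(T) ≤ u} = {T ≤ W(u)}`, whose probability under
`Unif(0, W(ℓ))` is `W(u)/W(ℓ)`.
-/

theorem volume_Iic_inter_Ioo_zero {a b : ℝ} (hab : a ≤ b) :
    volume (Iic a ∩ Ioo 0 b) = ENNReal.ofReal a := by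
  apply le_antisymm
  · calc volume (Iic a ∩ Ioo 0 b) ≤ volume (Ioc 0 a) :=
          measure_mono fun t ⟨hta, ht0, _⟩ => ⟨ht0, hta⟩
      _ = ENNReal.ofReal a := by rw [Real.volume_Ioc, sub_zero]
  · calc ENNReal.ofReal a = volume (Ioo 0 a) := by rw [Real.volume_Ioo, sub_zero]
      _ ≤ volume (Iic a ∩ Ioo 0 b) :=
          measure_mono fun t ⟨ht0, hta⟩ => ⟨hta.le, ht0, hta.trans_le hab⟩

theorem map_uniform_Ioo_apply_Iic {f : ℝ → ℝ} (hf : Measurable f) {a b u : ℝ} (hb : 0 < b)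
    (hab : a ≤ b) (hfu : ∀ t ∈ Ioo 0 b, f t ≤ u ↔ t ≤ a) :
    Measure.map f ((ENNReal.ofReal b)⁻¹ • volume.restrict (Ioo 0 b)) (Iic u)
      = ENNReal.ofReal (a / b) := by
  have hpreimage : f ⁻¹' Iic u ∩ Ioo 0 b = Iic a ∩ Ioo 0 b := by
    ext t
    simp only [mem_inter_iff, mem_preimage, mem_Iic]
    exact ⟨fun ⟨h, ht⟩ => ⟨(hfu t ht).mp h, ht⟩, fun ⟨h, ht⟩ => ⟨(hfu t ht).mpr h, ht⟩⟩
  rw [Measure.map_apply hf measurableSet_Iic, Measure.smul_apply,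
    Measure.restrict_apply (hf measurableSet_Iic), hpreimage, volume_Iic_inter_Ioo_zero hab,
    smul_eq_mul, ENNReal.ofReal_div_of_pos hb, div_eq_mul_inv, mul_comm]

noncomputable def sliceSampler (Zinv : ℝ → ℝ) (t : ℝ) : ℝ :=
  if t ≤ 1 then 0 else Zinv (1 / t)

theorem measurable_sliceSampler {Zinv : ℝ → ℝ} (hZinv : Measurable Zinv) :
    Measurable (sliceSampler Zinv) :=
  Measurable.ite (measurableSet_le measurable_id measurable_const) measurable_const
    (hZinv.comp (measurable_const.div measurable_id))

theorem StrictAnti.le_iff_max_le_of_rightInvOn {Z Zinv : ℝ → ℝ} (hZ : StrictAnti Z)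
    {η s u : ℝ} (hZinv : RightInvOn Zinv Z (Icc η 1)) (hs : s ∈ Icc η 1) :
    Zinv s ≤ u ↔ max η (Z u) ≤ s := by
  rw [← hZ.le_iff_ge, hZinv hs, max_le_iff, and_iff_right hs.1]

theorem sliceSampler_le_iff {η : ℝ} (hη : η ∈ Ioc 0 1) {Z Zinv : ℝ → ℝ} (hZ : StrictAnti Z)
    (hZinv : RightInvOn Zinv Z (Icc η 1)) {u t : ℝ} (hu : 0 ≤ u) (hZu : Z u ≤ 1)
    (ht : t ∈ Ioc 0 (1 / η)) :
    sliceSampler Zinv t ≤ u ↔ t ≤ 1 / max η (Z u) := by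
  have hmax : 0 < max η (Z u) := lt_max_of_lt_left hη.1
  unfold sliceSampler
  split_ifs with ht1
  · have hW : 1 ≤ 1 / max η (Z u) := by rw [le_div_iff₀ hmax, one_mul]; exact max_le hη.2 hZu
    exact iff_of_true hu (ht1.trans hW)
  · have hs : 1 / t ∈ Icc η 1 :=
      ⟨(le_div_iff₀ ht.1).mpr ((le_div_iff₀' hη.1).mp ht.2),
        (div_le_one ht.1).mpr (not_le.mp ht1).le⟩
    rw [hZ.le_iff_max_le_of_rightInvOn hZinv hs, le_one_div hmax ht.1]

theorem slice_variable_sampler_general (η : ℝ) (hη : η ∈ Ioc (0 : ℝ) 1)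
    (Z : ℝ → ℝ) (hZanti : StrictAnti Z) (hZ0 : Z 0 = 1)
    (Zinv : ℝ → ℝ) (hZinv : ∀ s, η ≤ s → s ≤ 1 → Z (Zinv s) = s)
    (hZinvMeas : Measurable Zinv)
    (W : ℝ → ℝ) (hW : ∀ u, W u = 1 / max η (Z u))
    (ℓ : ℝ)  -- ℓ = L(x), the current likelihood value
    -- ν is the law of T ∼ Unif(0, 1/max{η, Z(ℓ)}) = Unif(0, W(ℓ))
    (ν : Measure ℝ)
    (hν : ν = (ENNReal.ofReal (W ℓ))⁻¹ • volume.restrict (Ioo 0 (W ℓ))) :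
    ∀ u ∈ Icc (0 : ℝ) ℓ,
      (Measure.map (fun t => if t ≤ 1 then (0 : ℝ) else Zinv (1 / t)) ν) (Iic u)
        = ENNReal.ofReal (W u / W ℓ) := by
  rintro u ⟨hu0, huℓ⟩
  have hmaxℓ : 0 < max η (Z ℓ) := lt_max_of_lt_left hη.1
  have hWℓ : 0 < W ℓ := by rw [hW]; positivity
  have hWℓ_le : W ℓ ≤ 1 / η := by rw [hW]; gcongr; exacts [hη.1, le_max_left _ _]
  have hWu_le : W u ≤ W ℓ := by rw [hW, hW]; gcongr; exact hZanti.antitone huℓ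
  rw [hν]
  refine map_uniform_Ioo_apply_Iic (measurable_sliceSampler hZinvMeas) hWℓ hWu_le
    fun t ht => ?_
  rw [hW u]
  exact sliceSampler_le_iff hη hZanti (fun s hs => hZinv s hs.1 hs.2) hu0
    (hZ0 ▸ hZanti.antitone hu0) ⟨ht.1, ht.2.le.trans hWℓ_le⟩

/-- Lemma 2 of the paper: with `W(u) = 1/max{η, Z(u)}`, drawing
`T ∼ Unif(0, 1/max{η, Z(L(x))})` and setting `u = 0` if `T ≤ 1`, else `u = Z⁻¹(1/T)`,
produces a draw from the conditional density `w(u) 𝕀{0 ≤ u ≤ L(x)}/W(L(x))` (with `w = W'`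
in the distributional sense, including an atom at `0`); equivalently, the CDF of the draw is
`u ↦ W(u)/W(L(x))` on `[0, L(x)]`. -/
theorem slice_variable_sampler (η : ℝ) (hη : η ∈ Ioc (0 : ℝ) 1)
    (Z : ℝ → ℝ) (hZcont : Continuous Z) (hZanti : StrictAnti Z) (hZ0 : Z 0 = 1)
    (Zinv : ℝ → ℝ) (hZinv : ∀ s, η ≤ s → s ≤ 1 → Z (Zinv s) = s)
    (hZinvMeas : Measurable Zinv)
    (W : ℝ → ℝ) (hW : ∀ u, W u = 1 / max η (Z u))
    (ℓ : ℝ) (hℓ : 0 < ℓ)  -- ℓ = L(x), the current likelihood value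
    -- ν is the law of T ∼ Unif(0, 1/max{η, Z(ℓ)}) = Unif(0, W(ℓ))
    (ν : Measure ℝ)
    (hν : ν = (ENNReal.ofReal (W ℓ))⁻¹ • volume.restrict (Ioo 0 (W ℓ))) :
    ∀ u ∈ Icc (0 : ℝ) ℓ,
      (Measure.map (fun t => if t ≤ 1 then (0 : ℝ) else Zinv (1 / t)) ν) (Iic u)
        = ENNReal.ofReal (W u / W ℓ) :=
  slice_variable_sampler_general η hη Z hZanti hZ0 Zinv hZinv hZinvMeas W hW ℓ ν hν
end

section
/- Let $d \geq 1$, $\nu, \tau > 0$, $a = (\nu+d)/2$, $b = \nu/2 + 1$, $s = \nu\tau/2$. Then $\int_{\mathbb{R}^d} (1 + x^Tx/\nu)^{-a} \,(\tau/2\pi)^{d/2} e^{-\tau x^T x/2}\, dx = \frac{s^a}{\Gamma(a)} \int_0^\infty (t+1)^{b-a-1} t^{a-1} e^{-st}\, dt = s^a\, U(a, b, s)$, where $U$ is Kummer's confluent hypergeometric function of the second kind. -/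
/-!
Write `(1 + ‖x‖²/ν)^(-a)` as the Gamma mixture `Γ(a)⁻¹ ∫₀^∞ t^(a-1) e^{-t(1 + ‖x‖²/ν)} dt`.
After exchanging the two integrals (the joint integrand is dominated by a Gaussian in `x` times a
Gamma density in `t`), the `x`-integral is Gaussian and equals `(π/(t/ν + c))^(d/2)`. The
substitution `t ↦ cν t` turns `t/ν + c` into `c(t + 1)`, which leaves exactly Kummer's integral
with `s = cν` and `b - a - 1 = -d/2`; for `c = τ/2` the constant `(π/c)^(d/2)` cancels the
normalisation `(τ/2π)^(d/2)`.
-/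

open MeasureTheory Set Real

/-- Kummer's confluent hypergeometric function of the second kind,
`U(a,b,s) = (1/Γ(a)) ∫_0^∞ t^(a-1) (1+t)^(b-a-1) e^(-st) dt`. -/
noncomputable def kummerU (a b s : ℝ) : ℝ :=
  (1 / Real.Gamma a) * ∫ t in Ioi (0 : ℝ), t ^ (a - 1) * (1 + t) ^ (b - a - 1) * Real.exp (-s * t)

theorem integrableOn_rpow_mul_exp_neg_mul_Ioi {a r : ℝ} (ha : 0 < a) (hr : 0 < r) :
    IntegrableOn (fun t : ℝ ↦ t ^ (a - 1) * rexp (-(r * t))) (Ioi 0) := by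
  simpa [neg_mul] using integrableOn_rpow_mul_exp_neg_mul_rpow (p := 1) (by linarith) one_pos hr

theorem rpow_neg_eq_inv_Gamma_mul_integral {a r : ℝ} (ha : 0 < a) (hr : 0 < r) :
    r ^ (-a) = (Gamma a)⁻¹ * ∫ t in Ioi 0, t ^ (a - 1) * rexp (-(r * t)) := by
  rw [integral_rpow_mul_exp_neg_mul_Ioi ha hr, one_div, inv_rpow hr.le, ← rpow_neg hr.le]
  field_simp [(Gamma_pos_of_pos ha).ne']

theorem integral_Ioi_rpow_mul_exp_neg_mul_pi_div_add_rpow {a ν c : ℝ} (hν : 0 < ν) (hc : 0 < c)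
    (k : ℝ) :
    ∫ t in Ioi 0, t ^ (a - 1) * rexp (-t) * (π / (t / ν + c)) ^ k
      = (c * ν) ^ a * (π / c) ^ k
          * ∫ t in Ioi 0, (t + 1) ^ (-k) * t ^ (a - 1) * rexp (-(c * ν) * t) := by
  set s := c * ν
  have hs : 0 < s := by positivity
  have hsub := integral_comp_mul_left_Ioi'
    (fun t ↦ t ^ (a - 1) * rexp (-t) * (π / (t / ν + c)) ^ k) 0 hs
  rw [mul_zero] at hsub
  rw [← hsub, smul_eq_mul, ← integral_const_mul, ← integral_const_mul]
  refine setIntegral_congr_fun measurableSet_Ioi fun t (ht : 0 < t) ↦ ?_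
  have hpi : π / (s * t / ν + c) = π / c * (t + 1)⁻¹ := by
    field_simp [s]
    ring
  have ht1 : 0 ≤ t + 1 := by positivity
  rw [hpi, mul_rpow (x := π / c) (by positivity) (inv_nonneg.2 ht1), inv_rpow ht1,
    ← rpow_neg ht1, mul_rpow hs.le ht.le, rpow_sub_one hs.ne', neg_mul]
  field_simp

section InnerProductSpace

variable {V : Type*} [NormedAddCommGroup V] [InnerProductSpace ℝ V] [FiniteDimensional ℝ V]
  [MeasurableSpace V] [BorelSpace V] {a ν c : ℝ}

theorem integrable_rexp_neg_mul_sq_norm (hc : 0 < c) :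
    Integrable fun x : V ↦ rexp (-c * ‖x‖ ^ 2) := by
  refine (GaussianFourier.integrable_cexp_neg_mul_sq_norm_add (V := V) (b := c)
    (by simpa using hc) 0 0).norm.congr (.of_forall fun x ↦ ?_)
  simp [Complex.norm_exp, ← Complex.ofReal_pow]

theorem integrable_rpow_mul_exp_neg_mul_exp_neg_mul_sq_norm (ha : 0 < a) (hν : 0 < ν)
    (hc : 0 < c) :
    Integrable (fun p : V × ℝ ↦ p.2 ^ (a - 1) * rexp (-p.2) * rexp (-(p.2 / ν + c) * ‖p.1‖ ^ 2))
      ((volume : Measure V).prod (volume.restrict (Ioi 0))) := by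
  have hgamma : IntegrableOn (fun t : ℝ ↦ t ^ (a - 1) * rexp (-t)) (Ioi 0) := by
    simpa using integrableOn_rpow_mul_exp_neg_mul_Ioi ha one_pos
  have hdom := (integrable_rexp_neg_mul_sq_norm (V := V) hc).mul_prod hgamma
  refine hdom.mono' (by fun_prop) ?_
  filter_upwards [Measure.quasiMeasurePreserving_snd.ae (ae_restrict_mem measurableSet_Ioi)]
    with ⟨x, t⟩ (ht : 0 < t)
  have hexp : rexp (-(t / ν + c) * ‖x‖ ^ 2) ≤ rexp (-c * ‖x‖ ^ 2) := by
    gcongr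
    nlinarith [div_pos ht hν, sq_nonneg ‖x‖]
  rw [norm_of_nonneg (by positivity), mul_comm]
  gcongr

theorem integral_one_add_sq_norm_div_rpow_neg_mul_exp (ha : 0 < a) (hν : 0 < ν) (hc : 0 < c) :
    ∫ x : V, (1 + ‖x‖ ^ 2 / ν) ^ (-a) * rexp (-c * ‖x‖ ^ 2)
      = (Gamma a)⁻¹ * ∫ t in Ioi 0,
          t ^ (a - 1) * rexp (-t) * (π / (t / ν + c)) ^ (Module.finrank ℝ V / 2 : ℝ) := by
  have hmix (x : V) : (1 + ‖x‖ ^ 2 / ν) ^ (-a) * rexp (-c * ‖x‖ ^ 2)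
      = (Gamma a)⁻¹ * ∫ t in Ioi 0, t ^ (a - 1) * rexp (-t) * rexp (-(t / ν + c) * ‖x‖ ^ 2) := by
    rw [rpow_neg_eq_inv_Gamma_mul_integral ha (by positivity), mul_assoc, ← integral_mul_const]
    congr 1
    refine integral_congr_ae (.of_forall fun t ↦ ?_)
    simp only [mul_assoc, ← exp_add]
    ring_nf
  have hgauss : ∀ t ∈ Ioi (0 : ℝ),
      ∫ x : V, t ^ (a - 1) * rexp (-t) * rexp (-(t / ν + c) * ‖x‖ ^ 2)
        = t ^ (a - 1) * rexp (-t) * (π / (t / ν + c)) ^ (Module.finrank ℝ V / 2 : ℝ) := by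
    intro t (ht : 0 < t)
    rw [integral_const_mul, GaussianFourier.integral_rexp_neg_mul_sq_norm (by positivity)]
  simp_rw [hmix]
  rw [integral_const_mul,
    integral_integral_swap (integrable_rpow_mul_exp_neg_mul_exp_neg_mul_sq_norm ha hν hc),
    setIntegral_congr_fun measurableSet_Ioi hgauss]

end InnerProductSpace

theorem t_normal_integral_kummer_general (d : ℕ) (ν τ : ℝ) (hν : 0 < ν) (hτ : 0 < τ)
    (a b s : ℝ) (ha : a = (ν + d) / 2) (hb : b = ν / 2 + 1) (hs : s = ν * τ / 2) :
    (∫ x : EuclideanSpace ℝ (Fin d),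
        (1 + ‖x‖ ^ 2 / ν) ^ (-a) * ((τ / (2 * π)) ^ ((d : ℝ) / 2) * Real.exp (-τ * ‖x‖ ^ 2 / 2)))
      = (s ^ a / Real.Gamma a)
          * ∫ t in Ioi (0 : ℝ), (t + 1) ^ (b - a - 1) * t ^ (a - 1) * Real.exp (-s * t)
    ∧ (∫ x : EuclideanSpace ℝ (Fin d),
        (1 + ‖x‖ ^ 2 / ν) ^ (-a) * ((τ / (2 * π)) ^ ((d : ℝ) / 2) * Real.exp (-τ * ‖x‖ ^ 2 / 2)))
      = s ^ a * kummerU a b s := by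
  have ha0 : 0 < a := by rw [ha]; positivity
  have hexponent : b - a - 1 = -((d : ℝ) / 2) := by rw [ha, hb]; ring
  have hrate : τ / 2 * ν = s := by rw [hs]; ring
  have hnormalize : (τ / (2 * π)) ^ ((d : ℝ) / 2) * (π / (τ / 2)) ^ ((d : ℝ) / 2) = 1 := by
    rw [← mul_rpow (by positivity) (by positivity), show τ / (2 * π) * (π / (τ / 2)) = 1 by
      field_simp, one_rpow]
  have hfirst : (∫ x : EuclideanSpace ℝ (Fin d),
      (1 + ‖x‖ ^ 2 / ν) ^ (-a) * ((τ / (2 * π)) ^ ((d : ℝ) / 2) * rexp (-τ * ‖x‖ ^ 2 / 2)))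
      = (s ^ a / Gamma a)
          * ∫ t in Ioi (0 : ℝ), (t + 1) ^ (b - a - 1) * t ^ (a - 1) * rexp (-s * t) := by
    have hscale (x : EuclideanSpace ℝ (Fin d)) :
        (1 + ‖x‖ ^ 2 / ν) ^ (-a) * ((τ / (2 * π)) ^ ((d : ℝ) / 2) * rexp (-τ * ‖x‖ ^ 2 / 2))
          = (τ / (2 * π)) ^ ((d : ℝ) / 2)
              * ((1 + ‖x‖ ^ 2 / ν) ^ (-a) * rexp (-(τ / 2) * ‖x‖ ^ 2)) := by
      ring_nf
    simp_rw [hscale]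
    rw [integral_const_mul, integral_one_add_sq_norm_div_rpow_neg_mul_exp ha0 hν (half_pos hτ),
      integral_Ioi_rpow_mul_exp_neg_mul_pi_div_add_rpow hν (half_pos hτ),
      finrank_euclideanSpace_fin, hrate, hexponent]
    linear_combination (s ^ a / Gamma a * ∫ t in Ioi (0 : ℝ),
      (t + 1) ^ (-((d : ℝ) / 2)) * t ^ (a - 1) * rexp (-s * t)) * hnormalize
  refine ⟨hfirst, ?_⟩
  rw [hfirst, kummerU]
  simp_rw [add_comm (1 : ℝ), mul_comm ((_ : ℝ) ^ (a - 1)) ((_ + 1 : ℝ) ^ (b - a - 1))]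
  ring

/-- The multivariate-t/normal marginal-likelihood integral in terms of the Kummer function:
`∫_{ℝ^d} (1 + xᵀx/ν)^(-a) (τ/2π)^(d/2) e^(-τ xᵀx/2) dx = s^a U(a,b,s)` with
`a = (ν+d)/2`, `b = ν/2 + 1`, `s = ντ/2`. -/
theorem t_normal_integral_kummer (d : ℕ) (hd : 1 ≤ d) (ν τ : ℝ) (hν : 0 < ν) (hτ : 0 < τ)
    (a b s : ℝ) (ha : a = (ν + d) / 2) (hb : b = ν / 2 + 1) (hs : s = ν * τ / 2) :
    (∫ x : EuclideanSpace ℝ (Fin d),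
        (1 + ‖x‖ ^ 2 / ν) ^ (-a) * ((τ / (2 * π)) ^ ((d : ℝ) / 2) * Real.exp (-τ * ‖x‖ ^ 2 / 2)))
      = (s ^ a / Real.Gamma a)
          * ∫ t in Ioi (0 : ℝ), (t + 1) ^ (b - a - 1) * t ^ (a - 1) * Real.exp (-s * t)
    ∧ (∫ x : EuclideanSpace ℝ (Fin d),
        (1 + ‖x‖ ^ 2 / ν) ^ (-a) * ((τ / (2 * π)) ^ ((d : ℝ) / 2) * Real.exp (-τ * ‖x‖ ^ 2 / 2)))
      = s ^ a * kummerU a b s :=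
  t_normal_integral_kummer_general d ν τ hν hτ a b s ha hb hs
end
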